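/- For every ε > 0, the number of rational numbers x = α/β in lowest terms with |α| ≤ X, 1 ≤ β ≤ X, and rad(β) ≤ X^{1−2ε} is O_ε(X^{2−ε}). -/

import Mathlib

/-!
Every `β ≥ 1` factors as `β = s² u` with `u` squarefree, and `u ∣ β` gives `u ≤ rad β`. So the
denominators `β ≤ X` with `rad β ≤ Y` number at most `∑_s min(Y, X / s²) ≤ 3 √(XY)`, the sum
being split at `s ≈ √(X / Y)`. Each denominator carries at most `2X + 1` numerators, and with
`Y = X^{1-2ε}` this gives `9 X √(X Y) = 9 X^{2-ε}`.
-/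

/-- The radical of a positive integer: the product of its distinct prime divisors. -/
def rad (n : ℕ) : ℕ := ∏ p ∈ n.primeFactors, p

open Finset

lemma rad_pos (n : ℕ) : 0 < rad n :=
  prod_pos fun _ hp => (Nat.prime_of_mem_primeFactors hp).pos

lemma Squarefree.le_rad_of_dvd {u n : ℕ} (hu : Squarefree u) (hdvd : u ∣ n) (hn : n ≠ 0) :
    u ≤ rad n := by
  refine Nat.le_of_dvd (rad_pos n) ?_
  rw [← Nat.prod_primeFactors_of_squarefree hu]
  exact prod_dvd_prod_of_subset _ _ _ (Nat.primeFactors_mono hdvd hn)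

lemma sum_min_div_sq_le_of_cutoff (N m : ℕ) {P Y : ℝ} (hP : 0 ≤ P) (hY : 0 ≤ Y) :
    ∑ n ∈ Icc 1 N, min Y (P / (n : ℝ) ^ 2) ≤ m * Y + 2 * P / (m + 1) := by
  rw [← sum_filter_add_sum_filter_not _ (· ≤ m)]
  have hsmall : ∑ n ∈ (Icc 1 N).filter (· ≤ m), min Y (P / (n : ℝ) ^ 2) ≤ m * Y := by
    have hcard : #((Icc 1 N).filter (· ≤ m)) ≤ m := by
      calc #((Icc 1 N).filter (· ≤ m)) ≤ #(Icc 1 m) :=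
            card_le_card fun n hn => by simp only [mem_filter, mem_Icc] at hn ⊢; omega
        _ = m := by simp
    calc ∑ n ∈ (Icc 1 N).filter (· ≤ m), min Y (P / (n : ℝ) ^ 2)
        ≤ ∑ n ∈ (Icc 1 N).filter (· ≤ m), Y := sum_le_sum fun _ _ => min_le_left _ _
      _ ≤ m * Y := by
          rw [sum_const, nsmul_eq_mul]
          exact mul_le_mul_of_nonneg_right (by exact_mod_cast hcard) hY
  have hlarge :
      ∑ n ∈ (Icc 1 N).filter (¬ · ≤ m), min Y (P / (n : ℝ) ^ 2) ≤ 2 * P / (m + 1) := by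
    calc ∑ n ∈ (Icc 1 N).filter (¬ · ≤ m), min Y (P / (n : ℝ) ^ 2)
        ≤ ∑ n ∈ (Icc 1 N).filter (¬ · ≤ m), P * ((n : ℝ) ^ 2)⁻¹ :=
          sum_le_sum fun _ _ => (min_le_right _ _).trans_eq (div_eq_mul_inv _ _)
      _ ≤ ∑ n ∈ Ioo m (N + 1), P * ((n : ℝ) ^ 2)⁻¹ := by
          refine sum_le_sum_of_subset_of_nonneg (fun n hn => ?_) fun _ _ _ => by positivity
          simp only [mem_filter, mem_Icc, mem_Ioo] at hn ⊢
          omega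
      _ = P * ∑ n ∈ Ioo m (N + 1), ((n : ℝ) ^ 2)⁻¹ := (mul_sum _ _ _).symm
      _ ≤ P * (2 / (m + 1)) := by gcongr; exact sum_Ioo_inv_sq_le m (N + 1)
      _ = 2 * P / (m + 1) := by ring
  exact add_le_add hsmall hlarge

lemma sum_min_div_sq_le (N : ℕ) {P Y : ℝ} (hP : 0 < P) (hY : 0 < Y) :
    ∑ n ∈ Icc 1 N, min Y (P / (n : ℝ) ^ 2) ≤ 3 * √(P * Y) := by
  obtain ⟨p, hp, rfl⟩ : ∃ p, 0 < p ∧ P = p ^ 2 :=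
    ⟨√P, by positivity, (Real.sq_sqrt hP.le).symm⟩
  obtain ⟨y, hy, rfl⟩ : ∃ y, 0 < y ∧ Y = y ^ 2 :=
    ⟨√Y, by positivity, (Real.sq_sqrt hY.le).symm⟩
  have ht : 0 < p / y := by positivity
  calc ∑ n ∈ Icc 1 N, min (y ^ 2) (p ^ 2 / (n : ℝ) ^ 2)
      ≤ ⌊p / y⌋₊ * y ^ 2 + 2 * p ^ 2 / (⌊p / y⌋₊ + 1) :=
        sum_min_div_sq_le_of_cutoff N _ hP.le hY.le
    _ ≤ p / y * y ^ 2 + 2 * p ^ 2 / (p / y) := by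
        gcongr
        · exact Nat.floor_le ht.le
        · exact (Nat.lt_floor_add_one _).le
    _ = 3 * √(p ^ 2 * y ^ 2) := by
        rw [← mul_pow, Real.sqrt_sq (by positivity)]
        field_simp
        ring

lemma card_filter_rad_le (X : ℝ) {Y : ℝ} (hX : 0 < X) (hY : 0 < Y) :
    (#((Icc 1 ⌊X⌋₊).filter fun b => (rad b : ℝ) ≤ Y) : ℝ) ≤ 3 * √(X * Y) := by
  set D := (Icc 1 ⌊X⌋₊).filter fun b => (rad b : ℝ) ≤ Y
  have hsub : D ⊆ (Icc 1 ⌊X⌋₊).biUnion fun s =>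
      (Icc 1 ⌊min Y (X / (s : ℝ) ^ 2)⌋₊).image fun u => s ^ 2 * u := by
    intro b hb
    simp only [D, mem_filter, mem_Icc] at hb
    obtain ⟨⟨hb1, hbX⟩, hrad⟩ := hb
    obtain ⟨u, s, hu1, hs1, rfl, hsq⟩ := Nat.sq_mul_squarefree_of_pos hb1
    have hbX' : ((s ^ 2 * u : ℕ) : ℝ) ≤ X := (Nat.le_floor_iff hX.le).1 hbX
    have hu_rad : u ≤ rad (s ^ 2 * u) := hsq.le_rad_of_dvd (dvd_mul_left _ _) (by positivity)
    simp only [mem_biUnion, mem_image, mem_Icc]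
    refine ⟨s, ⟨hs1, le_trans ?_ hbX⟩, u, ⟨hu1, Nat.le_floor (le_min ?_ ?_)⟩, rfl⟩
    · nlinarith
    · exact (Nat.cast_le.2 hu_rad).trans hrad
    · rw [le_div_iff₀ (by positivity)]
      push_cast at hbX'
      linarith
  have hcard : #D ≤ ∑ s ∈ Icc 1 ⌊X⌋₊, ⌊min Y (X / (s : ℝ) ^ 2)⌋₊ :=
    (card_le_card hsub).trans <| card_biUnion_le.trans <|
      sum_le_sum fun _ _ => card_image_le.trans (by simp)
  calc (#D : ℝ) ≤ ∑ s ∈ Icc 1 ⌊X⌋₊, (⌊min Y (X / (s : ℝ) ^ 2)⌋₊ : ℝ) := by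
        exact_mod_cast hcard
    _ ≤ ∑ s ∈ Icc 1 ⌊X⌋₊, min Y (X / (s : ℝ) ^ 2) :=
        sum_le_sum fun _ _ => Nat.floor_le (by positivity)
    _ ≤ 3 * √(X * Y) := sum_min_div_sq_le _ hX hY

lemma ncard_rat_le (X : ℝ) (p : ℕ → Prop) [DecidablePred p] :
    ({x : ℚ | (|x.num| : ℝ) ≤ X ∧ (x.den : ℝ) ≤ X ∧ p x.den}.ncard : ℝ)
      ≤ (2 * ⌊X⌋₊ + 1) * #((Icc 1 ⌊X⌋₊).filter p) := by
  set M : ℤ := (⌊X⌋₊ : ℤ)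
  set T : Finset (ℤ × ℕ) := Icc (-M) M ×ˢ (Icc 1 ⌊X⌋₊).filter p
  have hmaps : ∀ x ∈ {x : ℚ | (|x.num| : ℝ) ≤ X ∧ (x.den : ℝ) ≤ X ∧ p x.den},
      (x.num, x.den) ∈ (T : Set (ℤ × ℕ)) := by
    rintro x ⟨hnum, hden, hp⟩
    have habs : |x.num| ≤ M := by
      have : x.num.natAbs ≤ ⌊X⌋₊ := Nat.le_floor (by rw [Nat.cast_natAbs]; exact_mod_cast hnum)
      rw [Int.abs_eq_natAbs]
      omega
    simp only [T, mem_coe, mem_product, mem_Icc, mem_filter]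
    exact ⟨abs_le.1 habs, ⟨x.pos, Nat.le_floor hden⟩, hp⟩
  have hinj : Function.Injective fun x : ℚ => (x.num, x.den) :=
    fun a b h => Rat.ext (congrArg Prod.fst h) (congrArg Prod.snd h)
  have hM : #(Icc (-M) M) = 2 * ⌊X⌋₊ + 1 := by rw [Int.card_Icc]; omega
  have := Set.ncard_le_ncard_of_injOn _ hmaps hinj.injOn
  rw [Set.ncard_coe_finset, card_product, hM] at this
  exact_mod_cast this

theorem stmt8_general (ε : ℝ) :
    ∃ C > (0 : ℝ), ∀ X : ℝ, 1 ≤ X →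
      (({x : ℚ | (|x.num| : ℝ) ≤ X ∧ (x.den : ℝ) ≤ X ∧
          (rad x.den : ℝ) ≤ X ^ (1 - 2 * ε)}).ncard : ℝ) ≤ C * X ^ (2 - ε) := by
  refine ⟨9, by norm_num, fun X hX => ?_⟩
  have hX0 : 0 < X := by linarith
  have hsqrt : √(X * X ^ (1 - 2 * ε)) = X ^ (1 - ε) := by
    rw [← Real.sqrt_mul_self (by positivity : 0 ≤ X ^ (1 - ε)), ← Real.rpow_add hX0,
      show 1 - ε + (1 - ε) = 1 + (1 - 2 * ε) by ring, Real.rpow_add hX0, Real.rpow_one]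
  have hpow : X * X ^ (1 - ε) = X ^ (2 - ε) := by
    rw [show 2 - ε = 1 + (1 - ε) by ring, Real.rpow_add hX0, Real.rpow_one]
  calc _ ≤ (2 * ⌊X⌋₊ + 1) *
          (#((Icc 1 ⌊X⌋₊).filter fun b => (rad b : ℝ) ≤ X ^ (1 - 2 * ε)) : ℝ) :=
        ncard_rat_le X _
    _ ≤ (3 * X) * (3 * √(X * X ^ (1 - 2 * ε))) := by
        gcongr
        · linarith [Nat.floor_le hX0.le]
        · exact card_filter_rad_le X hX0 (by positivity)
    _ = 9 * X ^ (2 - ε) := by rw [hsqrt, ← hpow]; ring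

/-- the number of rationals `x = α/β` in lowest terms with `|α| ≤ X`,
`1 ≤ β ≤ X` and `rad(β) ≤ X^{1-2ε}` is `O_ε(X^{2-ε})`. -/
theorem stmt8 (ε : ℝ) (hε : 0 < ε) :
    ∃ C > (0 : ℝ), ∀ X : ℝ, 1 ≤ X →
      (({x : ℚ | (|x.num| : ℝ) ≤ X ∧ (x.den : ℝ) ≤ X ∧
          (rad x.den : ℝ) ≤ X ^ (1 - 2 * ε)}).ncard : ℝ) ≤ C * X ^ (2 - ε) :=
  stmt8_general ε
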